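/- arXiv:1404.5244 — 3 statements merged into one kernel-verified Lean document; each statement's English description precedes it below -/
import Mathlib

section
/- Let w be a palindrome and let u be a proper prefix of w (i.e. u is a prefix of w with |u| < |w|) that is itself a palindrome. Then the number |w| − |u| is a period of w. -/
/-- `w = z^k`: concatenation of `k` copies of `z`. -/
def listPow {α : Type*} (z : List α) (k : ℕ) : List α := (List.replicate k z).flatten

/-- A positive integer `p` is a period of `w` if `w[i] = w[i+p]` whenever both positions
are inside `w` (0-indexed). -/
def HasPeriod {α : Type*} (w : List α) (p : ℕ) : Prop :=
  0 < p ∧ ∀ i : ℕ, i + p < w.length → w[i]? = w[i + p]?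

/-! Reversal maps the palindromic prefix `u` of the palindrome `w` onto a suffix of `w`, so `u`
is a border of `w`. The two occurrences of a border start `|w| - |u|` apart and read the same
letters, which is exactly a period `|w| - |u|`. -/

section

variable {α : Type*} {u w : List α}

theorem List.IsPrefix.isSuffix_of_reverse_eq (hpre : u <+: w) (hu : u.reverse = u)
    (hw : w.reverse = w) : u <:+ w := by
  rw [← hu, ← hw]
  exact List.reverse_suffix.mpr hpre

theorem hasPeriod_length_sub_of_isPrefix_of_isSuffix (hpre : u <+: w) (hsuf : u <:+ w)
    (hlt : u.length < w.length) : HasPeriod w (w.length - u.length) := by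
  obtain ⟨s, rfl⟩ := hpre
  obtain ⟨t, ht⟩ := hsuf
  have ht_length : t.length = (u ++ s).length - u.length := by
    have := congrArg List.length ht
    simp only [List.length_append] at this ⊢
    omega
  refine ⟨by omega, fun i hi => ?_⟩
  have hiu : i < u.length := by simp only [List.length_append] at hi; omega
  calc (u ++ s)[i]? = u[i]? := List.getElem?_append_left hiu
    _ = (t ++ u)[i + t.length]? := by
      rw [List.getElem?_append_right (by omega), Nat.add_sub_cancel]
    _ = (u ++ s)[i + ((u ++ s).length - u.length)]? := by rw [ht, ht_length]

end

/-- If `w` is a palindrome and `u` is a proper prefix of `w` that is a palindrome,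
then `|w| - |u|` is a period of `w`. -/
theorem stmt_2 {α : Type*} (w u : List α) (hw : w.reverse = w) (hu : u.reverse = u)
    (hpre : u <+: w) (hlt : u.length < w.length) :
    HasPeriod w (w.length - u.length) :=
  hasPeriod_length_sub_of_isPrefix_of_isSuffix hpre (hpre.isSuffix_of_reverse_eq hu hw) hlt
end

section
/- Let u and v be palindromes with v ≠ ε such that uv = z^k for some string z and some integer k ≥ 1. Then there exist palindromes x and y such that y ≠ ε, z = xy, u = (xy)^m x for some integer m ≥ 0, and v = (yx)^l y for some integer l ≥ 0. -/
section listPow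

variable {α : Type*}

@[simp]
lemma listPow_zero (z : List α) : listPow z 0 = [] := rfl

lemma listPow_succ (z : List α) (k : ℕ) : listPow z (k + 1) = z ++ listPow z k := by
  rw [listPow, List.replicate_succ, List.flatten_cons]
  rfl

lemma append_listPow_swap (x y : List α) (n : ℕ) :
    x ++ listPow (y ++ x) n = listPow (x ++ y) n ++ x := by
  induction n with
  | zero => simp
  | succ n ih => simp only [listPow_succ, List.append_assoc, ih]

lemma exists_of_append_eq_listPow {u v z : List α} {k : ℕ} (h : u ++ v = listPow z k)
    (hv : v ≠ []) :
    ∃ x y : List α, ∃ m l : ℕ, y ≠ [] ∧ z = x ++ y ∧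
      u = listPow (x ++ y) m ++ x ∧ v = y ++ listPow (x ++ y) l := by
  induction k generalizing u with
  | zero => exact absurd (List.append_eq_nil_iff.mp h).2 hv
  | succ k ih =>
    rw [listPow_succ] at h
    have hcut : (∃ c, u = z ++ c ∧ c ++ v = listPow z k) ∨
        ∃ y, y ≠ [] ∧ z = u ++ y ∧ v = y ++ listPow z k := by
      rcases List.append_eq_append_iff.mp h with ⟨y, hz, hvy⟩ | ⟨c, hu, hc⟩
      · rcases eq_or_ne y [] with rfl | hy
        · exact .inl ⟨[], by simpa using hz.symm, by simpa using hvy⟩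
        · exact .inr ⟨y, hy, hz, hvy⟩
      · exact .inl ⟨c, hu, hc.symm⟩
    rcases hcut with ⟨c, rfl, hc⟩ | ⟨y, hy, rfl, rfl⟩
    · obtain ⟨x, y, m, l, hy, rfl, rfl, rfl⟩ := ih hc
      exact ⟨x, y, m + 1, l, hy, rfl, by simp only [listPow_succ, List.append_assoc], rfl⟩
    · exact ⟨u, y, 0, k, hy, rfl, by simp, rfl⟩

end listPow

lemma List.reverse_eq_self_of_prefix_of_suffix {α : Type*} {p w : List α}
    (hw : w.reverse = w) (hpre : p <+: w) (hsuf : p <:+ w) : p.reverse = p := by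
  have hrev : p.reverse <+: w := by
    simpa [hw] using List.reverse_prefix.mpr hsuf
  exact (List.prefix_of_prefix_length_le hrev hpre (by simp)).eq_of_length (by simp)

theorem stmt_3_general {α : Type*} (u v z : List α) (hu : u.reverse = u) (hv : v.reverse = v)
    (hvne : v ≠ []) (k : ℕ) (h : u ++ v = listPow z k) :
    ∃ x y : List α, x.reverse = x ∧ y.reverse = y ∧ y ≠ [] ∧ z = x ++ y ∧
      (∃ m : ℕ, u = listPow (x ++ y) m ++ x) ∧ (∃ l : ℕ, v = listPow (y ++ x) l ++ y) := by
  obtain ⟨x, y, m, l, hy, rfl, rfl, rfl⟩ := exists_of_append_eq_listPow h hvne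
  refine ⟨x, y, ?_, ?_, hy, rfl, ⟨m, rfl⟩, ⟨l, append_listPow_swap y x l⟩⟩
  · refine List.reverse_eq_self_of_prefix_of_suffix hu ?_ (List.suffix_append _ _)
    rw [← append_listPow_swap]
    exact List.prefix_append _ _
  · refine List.reverse_eq_self_of_prefix_of_suffix hv (List.prefix_append _ _) ?_
    rw [append_listPow_swap]
    exact List.suffix_append _ _

/-- If `u`, `v` are palindromes with `v ≠ ε` and `uv = z^k` for some `k ≥ 1`, then there
are palindromes `x`, `y` with `y ≠ ε`, `z = xy`, `u = (xy)^m x` and `v = (yx)^l y`. -/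
theorem stmt_3 {α : Type*} (u v z : List α) (hu : u.reverse = u) (hv : v.reverse = v)
    (hvne : v ≠ []) (k : ℕ) (hk : 1 ≤ k) (h : u ++ v = listPow z k) :
    ∃ x y : List α, x.reverse = x ∧ y.reverse = y ∧ y ≠ [] ∧ z = x ++ y ∧
      (∃ m : ℕ, u = listPow (x ++ y) m ++ x) ∧ (∃ l : ℕ, v = listPow (y ++ x) l ++ y) :=
  stmt_3_general u v z hu hv hvne k h
end

section
/- Let s = w[i..j] be a nonempty leading subpalindrome of a string w with minimal period p, and let d be the length of the longest proper suffix-palindrome w[i'..j] of s (i < i' ≤ j + 1) whose occurrence is leading in w. Then d = min{ |s| − p, p + (|s| mod p) }. -/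
/-- The substring `w[i..j]` (1-indexed, `w[i..i-1] = ε`). -/
def substr {α : Type*} (w : List α) (i j : ℕ) : List α := (w.drop (i - 1)).take (j + 1 - i)

/-- `(i, j)` is an occurrence of a subpalindrome of `w`. -/
def SubPalAt {α : Type*} (w : List α) (i j : ℕ) : Prop :=
  1 ≤ i ∧ i ≤ j + 1 ∧ j ≤ w.length ∧ (substr w i j).reverse = substr w i j

/-- The occurrence `w[i..j]` is leading in `w`: every period `p` of every strictly longer
subpalindrome `w[i..j]` with the same right end satisfies `2p > j - i + 1`. -/
def LeadingAt {α : Type*} (w : List α) (i j : ℕ) : Prop :=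
  ∀ i2 p : ℕ, 1 ≤ i2 → i2 < i → (substr w i2 j).reverse = substr w i2 j →
    HasPeriod (substr w i2 j) p → 2 * p > j + 1 - i

/-!
For a palindrome `s`, the suffix `s.drop m` is a palindrome exactly when `m` is a period
of `s`. So proper suffix-palindromes sit at offsets `m ≥ p`, and by Fine–Wilf `p ∣ m` once
the suffix has length `≥ p`, in which case its length is `≡ |s| (mod p)`. Hence a
suffix-palindrome longer than `d = min (|s| - p) (p + |s| % p)` has length `≥ 2p` and
period `p`, so `s` itself shows it is not leading. The suffix of length `d` (at offset `p`
or `(|s| / p - 1) * p`) is leading: a longer subpalindrome ending at `j` either contains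
`s`, where leadership of `s` applies, or is a suffix of `s` of length `≥ 2p`, and a period
of it below `p` would by Fine–Wilf give a period of `s` below `p`.
-/
section

variable {α : Type*}

theorem hasPeriod_iff_drop_eq_take {s : List α} {m : ℕ} (hm : 0 < m) :
    HasPeriod s m ↔ s.drop m = s.take (s.length - m) := by
  refine ⟨fun h => List.ext_getElem? fun n => ?_, fun h => ⟨hm, fun x hx => ?_⟩⟩
  · rw [List.getElem?_drop, List.getElem?_take]
    split_ifs with hn
    · rw [h.2 n (by omega), Nat.add_comm]
    · exact List.getElem?_eq_none (by omega)
  · have hx' := congrArg (·[x]?) h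
    simp only [List.getElem?_drop, List.getElem?_take, if_pos (show x < s.length - m by omega)]
      at hx'
    rw [← hx', Nat.add_comm]

theorem hasPeriod_of_length_le {s : List α} {q : ℕ} (hq : 0 < q) (hlen : s.length ≤ q) :
    HasPeriod s q :=
  ⟨hq, fun x hx => absurd hx (by omega)⟩

namespace HasPeriod

variable {s : List α} {p : ℕ}

theorem mul (hp : HasPeriod s p) {k : ℕ} (hk : 0 < k) : HasPeriod s (k * p) := by
  refine ⟨Nat.mul_pos hk hp.1, fun x hx => ?_⟩
  clear hk
  induction k with
  | zero => simp
  | succ k ih =>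
    rw [Nat.succ_mul, ← Nat.add_assoc] at hx ⊢
    rw [ih (by omega), hp.2 _ hx]

theorem drop (hp : HasPeriod s p) (m : ℕ) : HasPeriod (s.drop m) p := by
  refine ⟨hp.1, fun x hx => ?_⟩
  rw [List.length_drop] at hx
  rw [List.getElem?_drop, List.getElem?_drop, ← Nat.add_assoc]
  exact hp.2 (m + x) (by omega)

theorem sub {a b : ℕ} (ha : HasPeriod s a) (hb : HasPeriod s b) (hab : a < b)
    (hlen : a + b ≤ s.length) : HasPeriod s (b - a) := by
  refine ⟨by omega, fun x hx => ?_⟩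
  by_cases hxb : x + b < s.length
  · have e := ha.2 (x + (b - a)) (by omega)
    rw [show x + (b - a) + a = x + b by omega] at e
    rw [hb.2 x hxb, e]
  · have e₁ := ha.2 (x - a) (by omega)
    have e₂ := hb.2 (x - a) (by omega)
    rw [show x - a + a = x by omega] at e₁
    rw [show x - a + b = x + (b - a) by omega] at e₂
    rw [← e₁, e₂]

theorem gcd {a b : ℕ} (ha : HasPeriod s a) (hb : HasPeriod s b) (hlen : a + b ≤ s.length) :
    HasPeriod s (Nat.gcd a b) := by
  induction h : a + b using Nat.strong_induction_on generalizing a b with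
  | _ n ih =>
  wlog hab : a ≤ b generalizing a b
  · rw [Nat.gcd_comm]
    exact this hb ha (by omega) (by omega) (by omega)
  rcases hab.eq_or_lt with rfl | hlt
  · rwa [Nat.gcd_self]
  · rw [← Nat.gcd_sub_self_right hab]
    exact ih b (by have := ha.1; omega) ha (ha.sub hb hlt hlen) (by omega) (by omega)

theorem of_drop {m g : ℕ} (hp : HasPeriod s p) (hg : HasPeriod (s.drop m) g)
    (hlen : p + g ≤ s.length - m) : HasPeriod s g := by
  refine ⟨hg.1, fun x hx => ?_⟩
  induction h : m - x using Nat.strong_induction_on generalizing x with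
  | _ n ih =>
  by_cases hxm : m ≤ x
  · have := hg.2 (x - m) (by rw [List.length_drop]; omega)
    rwa [List.getElem?_drop, List.getElem?_drop, Nat.add_sub_cancel' hxm, ← Nat.add_assoc,
      Nat.add_sub_cancel' hxm] at this
  · rw [hp.2 x (by omega), ih (m - (x + p)) (by have := hp.1; omega) (x + p) (by omega) rfl,
      hp.2 (x + g) (by omega), Nat.add_right_comm]

end HasPeriod

theorem hasPeriod_iff_drop_palindrome {s : List α} (hs : s.reverse = s) {m : ℕ} (hm : 0 < m) :
    HasPeriod s m ↔ (s.drop m).reverse = s.drop m := by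
  rw [hasPeriod_iff_drop_eq_take hm, List.reverse_drop, hs, eq_comm]

section MinimalPeriod

variable {s : List α} {p m : ℕ}

theorem IsLeast.dvd_of_drop_palindrome (hp : IsLeast {q | HasPeriod s q} p)
    (hs : s.reverse = s) (hm : 0 < m) (hpal : (s.drop m).reverse = s.drop m)
    (hlen : p ≤ s.length - m) : p ∣ m := by
  have hmp : HasPeriod s m := (hasPeriod_iff_drop_palindrome hs hm).2 hpal
  have hp0 : 0 < p := hp.1.1
  have hgcd : Nat.gcd m p = p :=
    le_antisymm (Nat.gcd_le_right m hp0) (hp.2 (hmp.gcd hp.1 (by omega)))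
  exact hgcd ▸ Nat.gcd_dvd_left m p

theorem IsLeast.two_mul_le_of_drop_palindrome (hp : IsLeast {q | HasPeriod s q} p)
    (hs : s.reverse = s) (hm : 0 < m) (hpal : (s.drop m).reverse = s.drop m)
    (hlong : min (s.length - p) (p + s.length % p) < s.length - m) :
    2 * p ≤ s.length - m := by
  have hpm : p ≤ m := hp.2 ((hasPeriod_iff_drop_palindrome hs hm).2 hpal)
  obtain ⟨k, rfl⟩ := hp.dvd_of_drop_palindrome hs hm hpal (by omega)
  have hmod : (s.length - p * k) % p = s.length % p := Nat.sub_mul_mod (by omega)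
  -- A suffix shorter than `2 * p` would have length `p + s.length % p`.
  by_contra hshort
  rw [show s.length - p * k = s.length - p * k - p + p by omega, Nat.add_mod_right,
    Nat.mod_eq_of_lt (by omega)] at hmod
  omega

theorem IsLeast.le_of_hasPeriod_drop (hp : IsLeast {q | HasPeriod s q} p) {q : ℕ}
    (hq : HasPeriod (s.drop m) q) (hlen : q + p ≤ s.length - m) : p ≤ q := by
  have hgcd : HasPeriod (s.drop m) (Nat.gcd q p) :=
    hq.gcd (hp.1.drop m) (by rw [List.length_drop]; omega)
  have hgq : Nat.gcd q p ≤ q := Nat.gcd_le_left p hq.1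
  exact (hp.2 (hp.1.of_drop hgcd (by omega))).trans hgq

end MinimalPeriod

theorem HasPeriod.length_sub_min {s : List α} {p : ℕ} (hp : HasPeriod s p)
    (hpL : p ≤ s.length) :
    HasPeriod s (s.length - min (s.length - p) (p + s.length % p)) := by
  have hr : s.length % p < p := Nat.mod_lt _ hp.1
  by_cases hshort : s.length < 2 * p
  · rwa [show s.length - min (s.length - p) (p + s.length % p) = p by omega]
  · have hdiv : p * (s.length / p) + s.length % p = s.length := Nat.div_add_mod _ _
    have hq : 2 ≤ s.length / p := (Nat.le_div_iff_mul_le hp.1).2 (by omega)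
    have h2p : p * 2 ≤ p * (s.length / p) := Nat.mul_le_mul_left p hq
    have hsub : (s.length / p - 1) * p = p * (s.length / p) - p := by
      rw [Nat.sub_one_mul, Nat.mul_comm]
    rw [show s.length - min (s.length - p) (p + s.length % p) = (s.length / p - 1) * p by
      omega]
    exact hp.mul (by omega)

section Substr

variable {w : List α} {i j : ℕ}

theorem substr_length (hi : 1 ≤ i) (hj : j ≤ w.length) : (substr w i j).length = j + 1 - i := by
  simp only [substr, List.length_take, List.length_drop]
  omega

theorem substr_eq_drop {i₂ : ℕ} (hi : 1 ≤ i) (hi₂ : i ≤ i₂) :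
    substr w i₂ j = (substr w i j).drop (i₂ - i) := by
  rw [substr, substr, List.drop_take, List.drop_drop, show i - 1 + (i₂ - i) = i₂ - 1 by omega,
    show j + 1 - i - (i₂ - i) = j + 1 - i₂ by omega]

end Substr

section LeadingSuffix

variable {w : List α} {i j p : ℕ}

theorem SubPalAt.two_mul_le_of_suffix (hsub : SubPalAt w i j)
    (hp : IsLeast {q | HasPeriod (substr w i j) q} p) {i₂ : ℕ} (hi₂ : i < i₂)
    (hpal : (substr w i₂ j).reverse = substr w i₂ j)
    (hlong : min ((j + 1 - i) - p) (p + (j + 1 - i) % p) < j + 1 - i₂) :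
    2 * p ≤ j + 1 - i₂ := by
  obtain ⟨hi, -, hj, hs⟩ := hsub
  have hL := substr_length hi hj
  rw [substr_eq_drop hi hi₂.le] at hpal
  have h := hp.two_mul_le_of_drop_palindrome hs (by omega) hpal (by rw [hL]; omega)
  omega

theorem SubPalAt.subPalAt_sub_min (hsub : SubPalAt w i j) (hper : HasPeriod (substr w i j) p)
    (hpL : p ≤ j + 1 - i) :
    SubPalAt w (j + 1 - min ((j + 1 - i) - p) (p + (j + 1 - i) % p)) j := by
  obtain ⟨hi, hij, hj, hs⟩ := hsub
  have hL := substr_length hi hj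
  have hcand := hper.length_sub_min (hL ▸ hpL)
  rw [hL] at hcand
  have hp0 := hper.1
  refine ⟨by omega, by omega, hj, ?_⟩
  rw [substr_eq_drop hi (by omega), ← hasPeriod_iff_drop_palindrome hs (by omega)]
  convert hcand using 1
  omega

theorem SubPalAt.leadingAt_sub_min (hsub : SubPalAt w i j) (hlead : LeadingAt w i j)
    (hp : IsLeast {q | HasPeriod (substr w i j) q} p) (hpL : p ≤ j + 1 - i) :
    LeadingAt w (j + 1 - min ((j + 1 - i) - p) (p + (j + 1 - i) % p)) j := by
  have hL := substr_length hsub.1 hsub.2.2.1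
  have hr : (j + 1 - i) % p < p := Nat.mod_lt _ hp.1.1
  intro i₂ q hi₂ hi₂D hpal hq
  rcases lt_trichotomy i₂ i with hlt | rfl | hgt
  · have := hlead i₂ q hi₂ hlt hpal hq
    omega
  · have := hp.2 hq
    omega
  · have h2p := hsub.two_mul_le_of_suffix hp hgt hpal (by omega)
    rw [substr_eq_drop hsub.1 hgt.le] at hq
    by_contra hsmall
    have := hp.le_of_hasPeriod_drop hq (by omega)
    omega

theorem SubPalAt.length_le_min_of_leadingAt (hsub : SubPalAt w i j)
    (hp : IsLeast {q | HasPeriod (substr w i j) q} p) {i' : ℕ} (hi' : i < i')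
    (hsub' : SubPalAt w i' j) (hlead' : LeadingAt w i' j) :
    j + 1 - i' ≤ min ((j + 1 - i) - p) (p + (j + 1 - i) % p) := by
  by_contra! hlong
  have h2p := hsub.two_mul_le_of_suffix hp hi' hsub'.2.2.2 hlong
  have := hlead' i p hsub.1 hi' hsub.2.2.2 hp.1
  omega

end LeadingSuffix

end

/-- If `s = w[i..j]` is a nonempty leading subpalindrome of `w` with minimal period `p`
and `d` is the length of the longest proper suffix-palindrome of `s` whose occurrence is
leading in `w`, then `d = min (|s| - p) (p + |s| % p)`. -/
theorem stmt_10 {α : Type*} (w : List α) (i j i' p : ℕ) (hne : i ≤ j)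
    (hsub : SubPalAt w i j) (hlead : LeadingAt w i j)
    (hper : HasPeriod (substr w i j) p) (hmin : ∀ q, HasPeriod (substr w i j) q → p ≤ q)
    (hi' : i < i') (hsub' : SubPalAt w i' j) (hlead' : LeadingAt w i' j)
    (hlongest : ∀ i'', i < i'' → SubPalAt w i'' j → LeadingAt w i'' j → i' ≤ i'') :
    j + 1 - i' = min ((j + 1 - i) - p) (p + (j + 1 - i) % p) := by
  have hp : IsLeast {q | HasPeriod (substr w i j) q} p := ⟨hper, hmin⟩
  have hp0 := hper.1
  have hpL : p ≤ j + 1 - i :=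
    hmin _ (hasPeriod_of_length_le (by omega) (substr_length hsub.1 hsub.2.2.1).le)
  have hle := hlongest _ (by omega) (hsub.subPalAt_sub_min hper hpL)
    (hsub.leadingAt_sub_min hlead hp hpL)
  have hge := hsub.length_le_min_of_leadingAt hp hi' hsub' hlead'
  omega
end
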